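/- For all N ≥ 2, (Φ(4, N+1) − 1)/2 = min over a, b ≥ 1 with a + b = N of Φ(4, a) + 2^b − 1, where Φ(4, M) = Σ_{n=0}^{M−1} 2^{∇_4(n)} and ∇_4(n) = max{k ≥ 0 : k(k+1)/2 ≤ n}. -/

import Mathlib

/-- `∇_4(n) := max{k ≥ 0 : k(k+1)/2 ≤ n}`. -/
def nabla4 (n : ℕ) : ℕ := Nat.findGreatest (fun k => Nat.choose (k + 1) 2 ≤ n) n

/-- `Φ(4, N) := Σ_{n=0}^{N-1} 2^{∇_4(n)}`. -/
def Phi4 (N : ℕ) : ℕ := ∑ n ∈ Finset.range N, 2 ^ nabla4 n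

/-!
Write `k = ∇₄(N)`. Splitting off `b = k` is optimal: moving one unit from `b` to `a` changes
`Φ(4, a) + 2^b - 1` by `2^{∇₄(a)} - 2^{b-1}`, and these increments are nondecreasing in `a` and
change sign exactly at `a = N - k`. On the other hand `Φ(4, ·)` is explicit on the blocks
`[k(k+1)/2, (k+1)(k+2)/2)` where `∇₄` is constant, which gives the doubling identity
`Φ(4, N+1) + 1 = 2 (Φ(4, N - k) + 2^k)`.
-/

/-- The triangular number `k(k+1)/2`, the left end of the block on which `∇₄ = k`. -/
def triangle (k : ℕ) : ℕ := (k + 1).choose 2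

lemma triangle_one : triangle 1 = 1 := rfl

lemma triangle_succ (k : ℕ) : triangle (k + 1) = triangle k + (k + 1) := by
  rw [triangle, Nat.choose_succ_succ, Nat.choose_one_right, triangle, add_comm]

lemma triangle_mono : Monotone triangle := fun _ _ h => Nat.choose_le_choose 2 (by omega)

lemma self_le_triangle (k : ℕ) : k ≤ triangle k := by
  induction k with
  | zero => exact le_rfl
  | succ k ih => rw [triangle_succ]; omega

lemma lt_triangle {n : ℕ} (hn : 2 ≤ n) : n < triangle n := by
  obtain ⟨m, rfl⟩ := Nat.exists_eq_add_of_le' hn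
  have := self_le_triangle (m + 1)
  rw [triangle_succ]
  omega

lemma gc_triangle_nabla4 : GaloisConnection triangle nabla4 := fun k n =>
  ⟨fun h => Nat.le_findGreatest (P := fun k => triangle k ≤ n) ((self_le_triangle k).trans h) h,
    fun h => (triangle_mono h).trans
      (Nat.findGreatest_spec (P := fun k => triangle k ≤ n) (Nat.zero_le n) (Nat.zero_le n))⟩

lemma nabla4_eq_of_triangle_le_of_lt {k n : ℕ} (h₁ : triangle k ≤ n) (h₂ : n < triangle (k + 1)) :
    nabla4 n = k :=
  le_antisymm (Nat.le_of_lt_succ (gc_triangle_nabla4.lt_iff_lt.1 h₂)) (gc_triangle_nabla4.le_u h₁)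

lemma phi4_succ (n : ℕ) : Phi4 (n + 1) = Phi4 n + 2 ^ nabla4 n :=
  Finset.sum_range_succ _ _

lemma phi4_triangle_add {k r : ℕ} (hr : r ≤ k + 1) :
    Phi4 (triangle k + r) = Phi4 (triangle k) + r * 2 ^ k := by
  induction r with
  | zero => simp
  | succ r ih =>
    have hblock : nabla4 (triangle k + r) = k :=
      nabla4_eq_of_triangle_le_of_lt (by omega) (by rw [triangle_succ]; omega)
    rw [← add_assoc, phi4_succ, ih (by omega), hblock]
    ring

lemma phi4_triangle_add_two_pow (k : ℕ) : Phi4 (triangle k) + 2 ^ k = k * 2 ^ k + 1 := by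
  induction k with
  | zero => rfl
  | succ k ih =>
    rw [triangle_succ, phi4_triangle_add le_rfl, pow_succ]
    linarith

lemma phi4_succ_add_one (n : ℕ) :
    Phi4 (n + 1) + 1 = 2 * (Phi4 (n - nabla4 n) + 2 ^ nabla4 n) := by
  have h₁ : triangle (nabla4 n) ≤ n := gc_triangle_nabla4.l_u_le n
  have h₂ : n < triangle (nabla4 n + 1) := gc_triangle_nabla4.lt_iff_lt.2 (Nat.lt_succ_self _)
  obtain ⟨r, hr⟩ := Nat.exists_eq_add_of_le h₁
  rcases hk : nabla4 n with _ | j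
  · rw [hk, zero_add, triangle_one] at h₂
    obtain rfl : n = 0 := by omega
    rfl
  · rw [hk, triangle_succ] at hr h₂
    have hsucc : n + 1 = triangle (j + 1) + (r + 1) := by rw [triangle_succ]; omega
    have hsub : n - (j + 1) = triangle j + r := by omega
    have hsucc_val := phi4_triangle_add_two_pow (j + 1)
    have hsub_val := phi4_triangle_add_two_pow j
    rw [hsucc, hsub, phi4_triangle_add (by omega), phi4_triangle_add (by omega)]
    rw [pow_succ] at hsucc_val ⊢
    linarith

lemma phi4_add_two_pow_succ_le_iff (a b : ℕ) :
    Phi4 a + 2 ^ (b + 1) ≤ Phi4 (a + 1) + 2 ^ b ↔ b ≤ nabla4 a := by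
  have : 2 ^ b ≤ 2 ^ nabla4 a ↔ b ≤ nabla4 a := pow_le_pow_iff_right₀ one_lt_two
  rw [phi4_succ, pow_succ, ← this]
  omega

lemma phi4_succ_add_two_pow_le_iff (a b : ℕ) :
    Phi4 (a + 1) + 2 ^ b ≤ Phi4 a + 2 ^ (b + 1) ↔ nabla4 a ≤ b := by
  have : 2 ^ nabla4 a ≤ 2 ^ b ↔ nabla4 a ≤ b := pow_le_pow_iff_right₀ one_lt_two
  rw [phi4_succ, pow_succ, ← this]
  omega

section Exchange

variable (N : ℕ)

lemma phi4_add_two_pow_antitoneOn :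
    AntitoneOn (fun a => Phi4 a + 2 ^ (N - a)) (Set.Iic (N - nabla4 N)) := by
  refine antitoneOn_of_succ_le Set.ordConnected_Iic fun a _ _ ha => ?_
  rw [Order.succ_eq_add_one, Set.mem_Iic] at ha
  have hmono : nabla4 a ≤ nabla4 N := gc_triangle_nabla4.monotone_u (by omega)
  simp only [Order.succ_eq_add_one, show N - a = N - (a + 1) + 1 by omega]
  exact (phi4_succ_add_two_pow_le_iff _ _).2 (by omega)

lemma phi4_add_two_pow_monotoneOn :
    MonotoneOn (fun a => Phi4 a + 2 ^ (N - a)) (Set.Icc (N - nabla4 N) N) := by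
  refine monotoneOn_of_le_succ Set.ordConnected_Icc fun a _ ha ha' => ?_
  rw [Order.succ_eq_add_one, Set.mem_Icc] at ha'
  rw [Set.mem_Icc] at ha
  have hle : triangle (N - a) ≤ triangle (nabla4 N) := triangle_mono (by omega)
  have hN : triangle (nabla4 N) ≤ N := gc_triangle_nabla4.l_u_le N
  rw [show N - a = N - (a + 1) + 1 by omega, triangle_succ] at hle
  simp only [Order.succ_eq_add_one, show N - a = N - (a + 1) + 1 by omega]
  exact (phi4_add_two_pow_succ_le_iff _ _).2 (gc_triangle_nabla4.le_u (by omega))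

lemma phi4_add_two_pow_nabla4_le {a : ℕ} (ha : a ≤ N) :
    Phi4 (N - nabla4 N) + 2 ^ nabla4 N ≤ Phi4 a + 2 ^ (N - a) := by
  have hk : nabla4 N ≤ N := Nat.findGreatest_le N
  have hopt : Phi4 (N - nabla4 N) + 2 ^ (N - (N - nabla4 N)) ≤ Phi4 a + 2 ^ (N - a) := by
    rcases le_total a (N - nabla4 N) with h | h
    · exact phi4_add_two_pow_antitoneOn N h Set.self_mem_Iic h
    · exact phi4_add_two_pow_monotoneOn N (Set.left_mem_Icc.2 (by omega)) ⟨h, ha⟩ h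
  rwa [Nat.sub_sub_self hk] at hopt

end Exchange

/-- For all `N ≥ 2`, `(Φ(4, N+1) − 1)/2` is the minimum of `Φ(4, a) + 2^b − 1`
over `a, b ≥ 1` with `a + b = N`. -/
theorem half_phi4_eq_min (N : ℕ) (hN : 2 ≤ N) :
    IsLeast {x : ℕ | ∃ a b : ℕ, 1 ≤ a ∧ 1 ≤ b ∧ a + b = N ∧
        x = Phi4 a + 2 ^ b - 1}
      ((Phi4 (N + 1) - 1) / 2) := by
  have hpos : 1 ≤ nabla4 N := gc_triangle_nabla4.le_u (by rw [triangle_one]; omega)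
  have hlt : nabla4 N < N := gc_triangle_nabla4.lt_iff_lt.1 (lt_triangle hN)
  have hval : (Phi4 (N + 1) - 1) / 2 = Phi4 (N - nabla4 N) + 2 ^ nabla4 N - 1 := by
    have := phi4_succ_add_one N
    omega
  refine ⟨⟨N - nabla4 N, nabla4 N, by omega, hpos, by omega, hval⟩, ?_⟩
  rintro _ ⟨a, b, -, -, rfl, rfl⟩
  have hmin := phi4_add_two_pow_nabla4_le (a + b) (Nat.le_add_right a b)
  rw [Nat.add_sub_cancel_left] at hmin
  rw [hval]
  omega
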